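/- Let l ≥ 1 and let a, b, c : ℤ → ℂ be l-periodic sequences. Let p be an integer, let T = tr A_l(p), and assume det A_l(p) = 0. Then for every integer j with 0 ≤ j ≤ l − 2 and every integer m ≥ 1, K_{lm+j}(p−j) = T^{m−1}·(K_j(p−j)·K_l(p) − b_{p−1}·c_{p−1}·K_{j−1}(p−j)·K_{l−1}(p+1)). -/

import Mathlib

/-!
`A_n(p)` is the transfer matrix of the three-term recurrence
`K_{n+2}(p) = a_p K_{n+1}(p+1) - b_p c_p K_n(p+2)` (Laplace expansion of the tridiagonal
determinant along its first row), so its first row is `(K_n(p), -b_{p+n-1} c_{p+n-1} K_{n-1}(p))`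
and its first column is `(K_n(p), K_{n-1}(p+1))`. Periodicity gives
`A_{lm+j}(p-j) = A_j(p-j) A_l(p)^m`, and by Cayley–Hamilton a `2 × 2` matrix `A` with
`det A = 0` satisfies `A^m = (tr A)^{m-1} A` for `m ≥ 1`. The formula is the `(0,0)` entry.
-/

noncomputable def contK (a b c : ℤ → ℂ) (p n : ℤ) : ℂ :=
  if n < 0 then 0 else
    Matrix.det (Matrix.of fun i j : Fin n.toNat =>
      if (i : ℕ) = (j : ℕ) then a (p + (i : ℕ))
      else if (i : ℕ) + 1 = (j : ℕ) then b (p + (i : ℕ))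
      else if (i : ℕ) = (j : ℕ) + 1 then c (p + (j : ℕ))
      else 0)

def Lmat (α β : ℂ) : Matrix (Fin 2) (Fin 2) ℂ := !![α, β; 1, 0]

noncomputable def Amat (a b c : ℤ → ℂ) (p : ℤ) (n : ℕ) : Matrix (Fin 2) (Fin 2) ℂ :=
  ((List.range n).map (fun i => Lmat (a (p + (i : ℕ))) (-(b (p + (i : ℕ)) * c (p + (i : ℕ)))))).prod

theorem Matrix.mul_self_eq_trace_smul_sub_det_smul {R : Type*} [CommRing R]
    (A : Matrix (Fin 2) (Fin 2) R) : A * A = A.trace • A - A.det • 1 := by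
  rw [Matrix.eta_fin_two A, Matrix.trace_fin_two_of, Matrix.det_fin_two_of]
  ext i j
  fin_cases i <;> fin_cases j <;> simp <;> ring

theorem Matrix.pow_succ_eq_trace_pow_smul_of_det_eq_zero {R : Type*} [CommRing R]
    {A : Matrix (Fin 2) (Fin 2) R} (hA : A.det = 0) (m : ℕ) : A ^ (m + 1) = A.trace ^ m • A := by
  induction m with
  | zero => simp
  | succ m ih =>
    rw [pow_succ, ih, Matrix.smul_mul, Matrix.mul_self_eq_trace_smul_sub_det_smul, hA, zero_smul,
      sub_zero, smul_smul, pow_succ]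

noncomputable def tridiag {R : Type*} [Zero R] (a b c : ℤ → R) (p : ℤ) (n : ℕ) :
    Matrix (Fin n) (Fin n) R :=
  Matrix.of fun i j =>
    if (i : ℕ) = (j : ℕ) then a (p + (i : ℕ))
    else if (i : ℕ) + 1 = (j : ℕ) then b (p + (i : ℕ))
    else if (i : ℕ) = (j : ℕ) + 1 then c (p + (j : ℕ))
    else 0

section Tridiag

variable {R : Type*} [CommRing R] (a b c : ℤ → R)

lemma tridiag_submatrix_succ (p : ℤ) (n : ℕ) :
    (tridiag a b c p (n + 1)).submatrix Fin.succ Fin.succ = tridiag a b c (p + 1) n := by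
  have shift : ∀ x : ℤ, p + (x + 1) = p + 1 + x := fun x => by ring
  ext i j
  simp only [tridiag, Matrix.submatrix_apply, Matrix.of_apply, Fin.val_succ, Nat.cast_succ,
    Nat.add_right_cancel_iff, shift]

lemma det_tridiag_add_two (p : ℤ) (n : ℕ) :
    (tridiag a b c p (n + 2)).det =
      a p * (tridiag a b c (p + 1) (n + 1)).det - b p * c p * (tridiag a b c (p + 2) n).det := by
  have hminor : ((tridiag a b c p (n + 2)).submatrix Fin.succ (Fin.succAbove 1)).det =
      c p * (tridiag a b c (p + 2) n).det := by
    have hcols : Fin.succAbove 1 ∘ Fin.succ = Fin.succ ∘ (Fin.succ : Fin n → Fin (n + 1)) := by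
      ext j; simp
    rw [Matrix.det_succ_column_zero, Fin.sum_univ_succ,
      Finset.sum_eq_zero fun i _ => by simp [tridiag], Fin.succAbove_zero,
      Matrix.submatrix_submatrix, hcols, ← Matrix.submatrix_submatrix, tridiag_submatrix_succ,
      tridiag_submatrix_succ, show p + 1 + 1 = p + 2 by ring]
    simp [tridiag]
  rw [Matrix.det_succ_row_zero, Fin.sum_univ_succ, Fin.sum_univ_succ,
    Finset.sum_eq_zero fun j _ => by simp [tridiag], Fin.succAbove_zero, tridiag_submatrix_succ,
    Fin.succ_zero_eq_one, hminor]
  simp [tridiag, sub_eq_add_neg, mul_assoc]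

end Tridiag

section Continuant

variable (a b c : ℤ → ℂ)

lemma contK_of_neg (p : ℤ) {n : ℤ} (hn : n < 0) : contK a b c p n = 0 :=
  if_pos hn

lemma contK_natCast (p : ℤ) (n : ℕ) : contK a b c p n = (tridiag a b c p n).det :=
  if_neg (Int.natCast_nonneg n).not_gt

lemma contK_zero (p : ℤ) : contK a b c p 0 = 1 := by
  simpa using contK_natCast a b c p 0

lemma contK_one (p : ℤ) : contK a b c p 1 = a p := by
  simpa [tridiag] using contK_natCast a b c p 1

lemma contK_add_two (p : ℤ) (n : ℕ) :
    contK a b c p (n + 2) =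
      a p * contK a b c (p + 1) (n + 1) - b p * c p * contK a b c (p + 2) n := by
  simpa [← contK_natCast] using det_tridiag_add_two a b c p n

lemma Amat_zero (p : ℤ) : Amat a b c p 0 = 1 := rfl

lemma Amat_add (p : ℤ) (s t : ℕ) :
    Amat a b c p (s + t) = Amat a b c p s * Amat a b c (p + s) t := by
  simp only [Amat, List.range_add, List.map_append, List.prod_append, List.map_map]
  congr 3
  ext i
  simp [add_assoc]

lemma Amat_succ (p : ℤ) (n : ℕ) :
    Amat a b c p (n + 1) = Amat a b c p n * Lmat (a (p + n)) (-(b (p + n) * c (p + n))) := by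
  rw [Amat_add]
  simp [Amat]

lemma Amat_succ' (p : ℤ) (n : ℕ) :
    Amat a b c p (n + 1) = Lmat (a p) (-(b p * c p)) * Amat a b c (p + 1) n := by
  rw [add_comm, Amat_add]
  simp [Amat]

lemma Amat_succ_apply_one_zero (p : ℤ) (n : ℕ) :
    Amat a b c p (n + 1) 1 0 = Amat a b c (p + 1) n 0 0 := by
  simp [Amat_succ', Lmat, Matrix.mul_apply]

lemma Amat_apply_zero_zero (p : ℤ) (n : ℕ) : Amat a b c p n 0 0 = contK a b c p n := by
  induction n using Nat.twoStepInduction generalizing p with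
  | zero => simp [Amat_zero, contK_zero]
  | one => simp [Amat_succ', Amat_zero, Lmat, contK_one]
  | more n ih₀ ih₁ =>
    rw [Amat_succ', Matrix.mul_apply, Fin.sum_univ_two, Amat_succ_apply_one_zero, ih₀, ih₁,
      add_assoc, one_add_one_eq_two]
    push_cast
    simp [Lmat, contK_add_two, sub_eq_add_neg]

lemma Amat_apply_one_zero (p : ℤ) (n : ℕ) :
    Amat a b c p n 1 0 = contK a b c (p + 1) (n - 1) := by
  cases n with
  | zero => simp [Amat_zero, contK_of_neg]
  | succ n => simp [Amat_succ_apply_one_zero, Amat_apply_zero_zero]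

lemma Amat_apply_zero_one (p : ℤ) (n : ℕ) :
    Amat a b c p n 0 1 = -(b (p + n - 1) * c (p + n - 1)) * contK a b c p (n - 1) := by
  cases n with
  | zero => simp [Amat_zero, contK_of_neg]
  | succ n =>
    simp [Amat_succ, Lmat, Matrix.mul_apply, Amat_apply_zero_zero, ← add_assoc, mul_comm]

variable {a b c}

lemma Amat_add_period {q : ℤ} (ha : Function.Periodic a q) (hb : Function.Periodic b q)
    (hc : Function.Periodic c q) (p : ℤ) (n : ℕ) : Amat a b c (p + q) n = Amat a b c p n := by
  simp only [Amat, add_right_comm p q, ha _, hb _, hc _]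

lemma Amat_mul_eq_pow {l : ℕ} (ha : Function.Periodic a l) (hb : Function.Periodic b l)
    (hc : Function.Periodic c l) (p : ℤ) (m : ℕ) : Amat a b c p (l * m) = Amat a b c p l ^ m := by
  induction m with
  | zero => exact Amat_zero a b c p
  | succ m ih =>
    rw [Nat.mul_succ, Amat_add, ih, pow_succ, Nat.cast_mul, mul_comm (l : ℤ),
      Amat_add_period (ha.nat_mul m) (hb.nat_mul m) (hc.nat_mul m)]

end Continuant

theorem contK_periodic_explicit_det_zero_general (l : ℕ) (a b c : ℤ → ℂ)
    (ha : ∀ k : ℤ, a (k + l) = a k) (hb : ∀ k : ℤ, b (k + l) = b k)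
    (hc : ∀ k : ℤ, c (k + l) = c k) (p : ℤ) (T : ℂ)
    (hT : T = (Amat a b c p l).trace) (hD0 : (Amat a b c p l).det = 0)
    (j : ℤ) (hj0 : 0 ≤ j) (m : ℕ) (hm : 1 ≤ m) :
    contK a b c (p - j) ((l : ℤ) * m + j) =
      T ^ (m - 1) * (contK a b c (p - j) j * contK a b c p (l : ℤ)
        - b (p - 1) * c (p - 1) * contK a b c (p - j) (j - 1)
          * contK a b c (p + 1) ((l : ℤ) - 1)) := by
  lift j to ℕ using hj0
  obtain ⟨m, rfl⟩ : ∃ m', m = m' + 1 := ⟨m - 1, by omega⟩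
  calc contK a b c (p - j) ((l : ℤ) * (m + 1 : ℕ) + j)
      = Amat a b c (p - j) (j + l * (m + 1)) 0 0 := by
        rw [Amat_apply_zero_zero]; push_cast; ring_nf
    _ = T ^ m * (Amat a b c (p - j) j * Amat a b c p l) 0 0 := by
        rw [Amat_add, sub_add_cancel, Amat_mul_eq_pow ha hb hc,
          Matrix.pow_succ_eq_trace_pow_smul_of_det_eq_zero hD0, ← hT, Matrix.mul_smul,
          Matrix.smul_apply, smul_eq_mul]
    _ = _ := by
        rw [Matrix.mul_apply, Fin.sum_univ_two, Amat_apply_zero_zero, Amat_apply_zero_zero,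
          Amat_apply_zero_one, Amat_apply_one_zero, sub_add_cancel, Nat.add_sub_cancel]
        ring

/-- Rózsa's explicit formula for periodic continuants (zero determinant case): for
`l`-periodic sequences, `T = tr A_l(p)`, `det A_l(p) = 0`, `0 ≤ j ≤ l − 2` and `m ≥ 1`:
`K_{lm+j}(p−j) = T^{m−1}·(K_j(p−j)·K_l(p) − b_{p−1}·c_{p−1}·K_{j−1}(p−j)·K_{l−1}(p+1))`. -/
theorem contK_periodic_explicit_det_zero (l : ℕ) (hl : 1 ≤ l) (a b c : ℤ → ℂ)
    (ha : ∀ k : ℤ, a (k + l) = a k) (hb : ∀ k : ℤ, b (k + l) = b k)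
    (hc : ∀ k : ℤ, c (k + l) = c k) (p : ℤ) (T : ℂ)
    (hT : T = (Amat a b c p l).trace) (hD0 : (Amat a b c p l).det = 0)
    (j : ℤ) (hj0 : 0 ≤ j) (hj : j ≤ (l : ℤ) - 2) (m : ℕ) (hm : 1 ≤ m) :
    contK a b c (p - j) ((l : ℤ) * m + j) =
      T ^ (m - 1) * (contK a b c (p - j) j * contK a b c p (l : ℤ)
        - b (p - 1) * c (p - 1) * contK a b c (p - j) (j - 1)
          * contK a b c (p + 1) ((l : ℤ) - 1)) :=
  contK_periodic_explicit_det_zero_general l a b c ha hb hc p T hT hD0 j hj0 m hm
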